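/- Fix integers K ≥ m ≥ 1, ε > 0, c : T_{K,m} → [0,1/K], and x ∈ [0,1]^K. Suppose the output P̂ = P_{c,ε}(x) of the partition algorithm is not a leaf of T_{K,m}. Then there exists an ancestor Q ⪯ P̂ and a child Q_j of Q in T_{K,m} such that |gap_{Q_j}(x) − c(Q)·range_Q(x)| ≤ 10Kε. -/

import Mathlib

open Classical

noncomputable section

namespace MPB

variable (K m : ℕ)

/-- Max of `x` over a finite set of coordinates. -/
def fmax (x : Fin K → ℝ) (S : Finset (Fin K)) : ℝ := sSup (x '' ↑S)

/-- Min of `x` over a finite set of coordinates. -/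
def fmin (x : Fin K → ℝ) (S : Finset (Fin K)) : ℝ := sInf (x '' ↑S)

/-- range_B(x) = max_{k∈B} x(k) - min_{k∈B} x(k). -/
def rangeX (x : Fin K → ℝ) (B : Finset (Fin K)) : ℝ := fmax K x B - fmin K x B

/-- gap of the child obtained by splitting `B` into `T > B \ T`:
gap = min_{k∈T} x(k) - max_{ℓ∈B\T} x(ℓ). -/
def gapX (x : Fin K → ℝ) (T B : Finset (Fin K)) : ℝ := fmin K x T - fmax K x (B \ T)

/-- i(P): the largest `i` such that the first `i` parts of the ordered partition `L`
have total size at most `m`. -/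
def iIdx (L : List (Finset (Fin K))) : ℕ :=
  Nat.findGreatest (fun i => ((L.take i).map Finset.card).sum ≤ m) L.length

/-- A(P): the union of the first i(P) parts (the coordinates already identified as
belonging to the top m). -/
def Aset (L : List (Finset (Fin K))) : Finset (Fin K) :=
  (L.take (iIdx K m L)).foldr (· ∪ ·) ∅

/-- B(P): the currently undecided part; `∅` if `|A(P)| = m`, else the part S_{i(P)+1}. -/
def Bset (L : List (Finset (Fin K))) : Finset (Fin K) :=
  if (Aset K m L).card = m then ∅ else L.getD (iIdx K m L) ∅

/-- A vertex of the tree T_{K,m} is encoded by the sequence of splits leading to it from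
the root (head = most recently chosen top part): this recovers its underlying ordered
partition, by splitting at each step the then-current undecided set B into `T > B \ T`. -/
def partitionOf : List (Finset (Fin K)) → List (Finset (Fin K))
  | [] => [Finset.univ]
  | T :: l =>
    let L := partitionOf l
    let i := iIdx K m L
    L.take i ++ [T, L.getD i ∅ \ T] ++ L.drop (i + 1)

/-- A(P) for a vertex of T_{K,m}. -/
def Anode (l : List (Finset (Fin K))) : Finset (Fin K) := Aset K m (partitionOf K m l)

/-- B(P) for a vertex of T_{K,m}. -/
def Bnode (l : List (Finset (Fin K))) : Finset (Fin K) := Bset K m (partitionOf K m l)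

/-- Membership in T_{K,m}: each successive split must cut the current undecided set B
into a nonempty strict subset (the new top part) and the rest. The root is `[]`, a
vertex is a leaf iff its `Bnode` is empty, `T :: l` is a child of `l`, and the ancestors
of a vertex are exactly its list suffixes. -/
def Valid : List (Finset (Fin K)) → Prop
  | [] => True
  | T :: l => Valid l ∧ T.Nonempty ∧ T ⊂ Bnode K m l

/-- The elements of `B` sorted by `x` in (weakly) decreasing order,
ties broken by coordinate index (stability of merge sort). -/
def sortedB (x : Fin K → ℝ) (B : Finset (Fin K)) : List (Fin K) :=
  (B.sort (· ≤ ·)).mergeSort (fun a b => decide (x b ≤ x a))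

/-- The set `{a_1, …, a_j}` of the `j` largest coordinates of `B` under `x`. -/
def topSet (x : Fin K → ℝ) (B : Finset (Fin K)) (j : ℕ) : Finset (Fin K) :=
  ((sortedB K x B).take j).toFinset

/-- Line 7 of Algorithm 1: the algorithm, currently at the vertex `l`, returns `l`
because for some ancestor `q ⪯ l` and some child `q_j` of `q` (splitting B(q) at the
`j`-th position of the `x`-sorted order), the quantity `gap_{q_j}(x) - c(q)·range_q(x)`
is within `(d(l,q)+1)·6ε` of zero. -/
def stopAt (c : List (Finset (Fin K)) → ℝ) (ε : ℝ) (x : Fin K → ℝ)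
    (l : List (Finset (Fin K))) : Prop :=
  ∃ q ∈ l.tails, ∃ j, 1 ≤ j ∧ j < (Bnode K m q).card ∧
    |gapX K x (topSet K x (Bnode K m q) j) (Bnode K m q) - c q * rangeX K x (Bnode K m q)|
      ≤ ((l.length - q.length + 1 : ℕ) : ℝ) * (6 * ε)

/-- Lines 10-15 of Algorithm 1: move from `l` to the child `l_j` for the smallest
`j ∈ {1, …, ℓ-1}` with `gap_{l_j}(x) ≥ c(l)·range_l(x)`. -/
def descend (c : List (Finset (Fin K)) → ℝ) (x : Fin K → ℝ)
    (l : List (Finset (Fin K))) : List (Finset (Fin K)) :=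
  if h : ∃ j, 1 ≤ j ∧ j < (Bnode K m l).card ∧
      c l * rangeX K x (Bnode K m l)
        ≤ gapX K x (topSet K x (Bnode K m l) j) (Bnode K m l)
  then topSet K x (Bnode K m l) (Nat.find h) :: l
  else l

/-- The while loop of Algorithm 1, with fuel (the tree T_{K,m} has depth < K, so fuel K
suffices for the loop to terminate as in the paper). -/
def run (c : List (Finset (Fin K)) → ℝ) (ε : ℝ) (x : Fin K → ℝ) :
    ℕ → List (Finset (Fin K)) → List (Finset (Fin K))
  | 0, l => l
  | n + 1, l =>
    if Bnode K m l = ∅ then l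
    else if stopAt K m c ε x l then l
    else run c ε x n (descend K m c x l)

/-- The vertex P_{c,ε}(x) ∈ T_{K,m} output by Algorithm 1 on input x. The vertices
visited by the while loop are exactly the suffixes of the output. -/
def Pmap (c : List (Finset (Fin K)) → ℝ) (ε : ℝ) (x : Fin K → ℝ) :
    List (Finset (Fin K)) :=
  run K m c ε x K []

/-!
Along the run of the algorithm the current vertex stays in `T_{K,m}`. At a non-leaf vertex
`P` the undecided set `B(P)` has at least two elements, and its at most `K - 1` consecutive
gaps (in the order of `x`) add up to `range_P(x)`; as `c(P) ≤ 1/K`, one of them is at least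
`c(P) · range_P(x)`, so the descent step always succeeds (Lemma 2.3). Each step splits one part
of the underlying ordered partition of `[K]` into two nonempty parts, so a non-leaf vertex has
depth `< K`. Hence, if the output is not a leaf, the loop was left through the stopping test,
whose bound `(d + 1) · 6ε` is at most `6Kε`.
-/

section SortedList

variable {K : ℕ} (x : Fin K → ℝ) {L : List (Fin K)}

lemma fmin_toFinset_take (hL : L.Pairwise (fun a b => x b ≤ x a)) {j : ℕ} (h1 : 1 ≤ j)
    (h2 : j ≤ L.length) : fmin K x (L.take j).toFinset = x L[j - 1] := by
  have hmem : L[j - 1] ∈ (L.take j).toFinset :=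
    List.mem_toFinset.mpr (List.mem_iff_getElem.mpr
      ⟨j - 1, by simp; omega, List.getElem_take⟩)
  rw [fmin, ← Finset.inf'_eq_csInf_image _ ⟨_, hmem⟩]
  refine le_antisymm (Finset.inf'_le _ hmem) (Finset.le_inf' _ _ fun b hb => ?_)
  obtain ⟨n, hn, rfl⟩ := List.mem_iff_getElem.mp (List.mem_toFinset.mp hb)
  rw [List.length_take] at hn
  rw [List.getElem_take]
  rcases (show n = j - 1 ∨ n < j - 1 by omega) with rfl | hlt
  · rfl
  · exact hL.rel_get_of_lt (a := ⟨n, by omega⟩) (b := ⟨j - 1, by omega⟩) hlt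

lemma fmax_toFinset_drop (hL : L.Pairwise (fun a b => x b ≤ x a)) {j : ℕ}
    (h : j < L.length) : fmax K x (L.drop j).toFinset = x L[j] := by
  have hmem : L[j] ∈ (L.drop j).toFinset :=
    List.mem_toFinset.mpr (List.mem_iff_getElem.mpr
      ⟨0, by simp; omega, by simp⟩)
  rw [fmax, ← Finset.sup'_eq_csSup_image _ ⟨_, hmem⟩]
  refine le_antisymm (Finset.sup'_le _ _ fun b hb => ?_) (Finset.le_sup' _ hmem)
  obtain ⟨n, hn, rfl⟩ := List.mem_iff_getElem.mp (List.mem_toFinset.mp hb)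
  rw [List.length_drop] at hn
  rw [List.getElem_drop]
  rcases Nat.eq_zero_or_pos n with rfl | hpos
  · simp
  · exact hL.rel_get_of_lt (a := ⟨j, h⟩) (b := ⟨j + n, by omega⟩) (by simp; omega)

lemma toFinset_sdiff_toFinset_take (hL : L.Nodup) (j : ℕ) :
    L.toFinset \ (L.take j).toFinset = (L.drop j).toFinset := by
  have hdisj : (L.take j).Disjoint (L.drop j) := by
    rw [← List.take_append_drop j L, List.nodup_append] at hL
    exact fun a ha hb => hL.2.2 a ha a hb rfl
  ext a
  have hsplit : a ∈ L ↔ a ∈ L.take j ∨ a ∈ L.drop j := by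
    rw [← List.mem_append, List.take_append_drop]
  simp only [Finset.mem_sdiff, List.mem_toFinset, hsplit]
  exact ⟨fun h => h.1.resolve_left h.2, fun h => ⟨Or.inr h, fun h' => hdisj h' h⟩⟩

end SortedList

section Sorting

variable {K : ℕ} (x : Fin K → ℝ)

lemma sortedB_perm (B : Finset (Fin K)) : (sortedB K x B).Perm (B.sort (· ≤ ·)) :=
  List.mergeSort_perm _ _

lemma sortedB_nodup (B : Finset (Fin K)) : (sortedB K x B).Nodup :=
  (sortedB_perm x B).nodup_iff.mpr (Finset.sort_nodup _ _)

lemma length_sortedB (B : Finset (Fin K)) : (sortedB K x B).length = B.card := by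
  rw [(sortedB_perm x B).length_eq, Finset.length_sort]

lemma toFinset_sortedB (B : Finset (Fin K)) : (sortedB K x B).toFinset = B := by
  ext a
  rw [List.mem_toFinset, (sortedB_perm x B).mem_iff, Finset.mem_sort]

lemma pairwise_sortedB (B : Finset (Fin K)) :
    (sortedB K x B).Pairwise (fun a b => x b ≤ x a) := by
  have h := List.pairwise_mergeSort (le := fun a b => decide (x b ≤ x a))
    (fun _ _ _ hab hbc => by simp only [decide_eq_true_eq] at *; exact hbc.trans hab)
    (fun a b => by simpa using le_total (x b) (x a)) (B.sort (· ≤ ·))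
  exact h.imp (by simp)

lemma topSet_ssubset {B : Finset (Fin K)} {j : ℕ} (hj : j < B.card) :
    topSet K x B j ⊂ B := by
  have hsub : topSet K x B j ⊆ B := by
    intro a ha
    rw [topSet, List.mem_toFinset] at ha
    rw [← toFinset_sortedB x B, List.mem_toFinset]
    exact List.take_subset _ _ ha
  refine Finset.ssubset_iff_subset_ne.mpr ⟨hsub, fun h => ?_⟩
  have := List.toFinset_card_le ((sortedB K x B).take j)
  rw [← topSet, h, List.length_take] at this
  omega

lemma topSet_nonempty {B : Finset (Fin K)} {j : ℕ} (h1 : 1 ≤ j) (h2 : j ≤ B.card) :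
    (topSet K x B j).Nonempty := by
  have hlen : 0 < ((sortedB K x B).take j).length := by
    rw [List.length_take, length_sortedB]; omega
  obtain ⟨a, ha⟩ := List.exists_mem_of_length_pos hlen
  exact ⟨a, List.mem_toFinset.mpr ha⟩

end Sorting

section Gaps

variable {K : ℕ} (x : Fin K → ℝ)

lemma gapX_topSet (B : Finset (Fin K)) {j : ℕ} (h1 : 1 ≤ j) (h2 : j < B.card) :
    gapX K x (topSet K x B j) B =
      x ((sortedB K x B)[j - 1]'(by rw [length_sortedB]; omega)) -
        x ((sortedB K x B)[j]'(by rw [length_sortedB]; omega)) := by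
  have hsdiff : B \ topSet K x B j = ((sortedB K x B).drop j).toFinset := by
    rw [topSet, ← toFinset_sdiff_toFinset_take (sortedB_nodup x B), toFinset_sortedB]
  rw [gapX, hsdiff, topSet,
    fmin_toFinset_take x (pairwise_sortedB x B) h1 (by rw [length_sortedB]; omega),
    fmax_toFinset_drop x (pairwise_sortedB x B)]

lemma rangeX_eq (B : Finset (Fin K)) (h : 1 ≤ B.card) :
    rangeX K x B =
      x ((sortedB K x B)[0]'(by rw [length_sortedB]; omega)) -
        x ((sortedB K x B)[B.card - 1]'(by rw [length_sortedB]; omega)) := by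
  have hlen := length_sortedB x B
  have hmax := fmax_toFinset_drop x (pairwise_sortedB x B) (j := 0) (by omega)
  have hmin := fmin_toFinset_take x (pairwise_sortedB x B) (j := (sortedB K x B).length)
    (by omega) le_rfl
  rw [List.drop_zero, toFinset_sortedB] at hmax
  rw [List.take_length, toFinset_sortedB] at hmin
  simp only [rangeX, hmax, hmin, hlen]

lemma sum_gapX_topSet (B : Finset (Fin K)) (h : 1 ≤ B.card) :
    ∑ j ∈ Finset.range (B.card - 1), gapX K x (topSet K x B (j + 1)) B = rangeX K x B := by
  set F : ℕ → ℝ := fun i => ((sortedB K x B).map x).getD i 0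
  have hF : ∀ i (hi : i < (sortedB K x B).length), x (sortedB K x B)[i] = F i := by
    intro i hi
    simp [F, List.getElem?_eq_getElem hi]
  have hlen := length_sortedB x B
  rw [rangeX_eq x B h, hF, hF, ← Finset.sum_range_sub']
  refine Finset.sum_congr rfl fun j hj => ?_
  rw [Finset.mem_range] at hj
  rw [gapX_topSet x B (by omega) (by omega), hF, hF]
  rfl

lemma exists_le_gapX_topSet {B : Finset (Fin K)} (hB : 2 ≤ B.card) {c : ℝ} (hc : c ≤ 1 / K) :
    ∃ j, 1 ≤ j ∧ j < B.card ∧ c * rangeX K x B ≤ gapX K x (topSet K x B j) B := by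
  by_contra! hsmall
  have hcardK : B.card ≤ K := (Finset.card_le_univ B).trans (by simp)
  have hKpos : (0 : ℝ) < K := by exact_mod_cast (show 0 < K by omega)
  have hsum := Finset.sum_lt_sum_of_nonempty (s := Finset.range (B.card - 1))
    (Finset.nonempty_range_iff.mpr (by omega))
    (fun j hj => hsmall (j + 1) (by omega) (by rw [Finset.mem_range] at hj; omega))
  rw [sum_gapX_topSet x B (by omega), Finset.sum_const, Finset.card_range, nsmul_eq_mul] at hsum
  have hrange : 0 ≤ rangeX K x B := by
    rw [← sum_gapX_topSet x B (by omega)]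
    refine Finset.sum_nonneg fun j hj => ?_
    rw [Finset.mem_range] at hj
    rw [gapX_topSet x B (by omega) (by omega), sub_nonneg]
    exact (pairwise_sortedB x B).rel_get_of_lt
      (a := ⟨j, by rw [length_sortedB]; omega⟩)
      (b := ⟨j + 1, by rw [length_sortedB]; omega⟩) (by simp)
  have hcount : ((B.card - 1 : ℕ) : ℝ) * c ≤ 1 :=
    calc ((B.card - 1 : ℕ) : ℝ) * c ≤ ((B.card - 1 : ℕ) : ℝ) * (1 / K) :=
          mul_le_mul_of_nonneg_left hc (Nat.cast_nonneg _)
      _ ≤ 1 := by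
          rw [mul_one_div, div_le_one hKpos]
          exact_mod_cast (show B.card - 1 ≤ K by omega)
  nlinarith

end Gaps

lemma pairwise_disjoint_split {α : Type*} [DecidableEq α] {pre post : List (Finset α)}
    {B T : Finset α} (h : (pre ++ B :: post).Pairwise Disjoint) (hT : T ⊆ B) :
    (pre ++ T :: (B \ T) :: post).Pairwise Disjoint := by
  simp only [List.pairwise_append, List.pairwise_cons, List.mem_cons] at h ⊢
  obtain ⟨hpre, ⟨hBpost, hpost⟩, hcross⟩ := h
  refine ⟨hpre, ⟨?_, fun S hS => (hBpost S hS).mono_left Finset.sdiff_subset, hpost⟩, ?_⟩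
  · rintro S (rfl | hS)
    · exact Finset.disjoint_sdiff
    · exact (hBpost S hS).mono_left hT
  · intro S hS R hR
    rcases hR with rfl | rfl | hR
    · exact (hcross S hS B (Or.inl rfl)).mono_right hT
    · exact (hcross S hS B (Or.inl rfl)).mono_right Finset.sdiff_subset
    · exact hcross S hS R (Or.inr hR)

lemma card_foldr_union {α : Type*} [DecidableEq α] {L : List (Finset α)}
    (h : L.Pairwise Disjoint) : (L.foldr (· ∪ ·) ∅).card = (L.map Finset.card).sum := by
  induction L with
  | nil => simp
  | cons S L ih =>
    rw [List.pairwise_cons] at h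
    have hdisj : ∀ L' : List (Finset α), (∀ R ∈ L', Disjoint S R) →
        Disjoint S (L'.foldr (· ∪ ·) ∅) := by
      intro L' hL'
      induction L' with
      | nil => simp
      | cons R L' ih' => simp_all [Finset.disjoint_union_right]
    rw [List.foldr_cons, List.map_cons, List.sum_cons,
      Finset.card_union_of_disjoint (hdisj L h.1), ih h.2]

section Tree

variable {K m : ℕ}

lemma sum_take_iIdx_le (L : List (Finset (Fin K))) :
    ((L.take (iIdx K m L)).map Finset.card).sum ≤ m :=
  Nat.findGreatest_spec (P := fun i => ((L.take i).map Finset.card).sum ≤ m)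
    (Nat.zero_le _) (by simp)

lemma lt_sum_take_iIdx_succ {L : List (Finset (Fin K))} (hi : iIdx K m L < L.length) :
    m < ((L.take (iIdx K m L + 1)).map Finset.card).sum :=
  not_le.mp (Nat.findGreatest_is_greatest
    (P := fun i => ((L.take i).map Finset.card).sum ≤ m) (Nat.lt_succ_self _) hi)

lemma Bnode_eq_getElem {l : List (Finset (Fin K))} (hB : Bnode K m l ≠ ∅) :
    ∃ hi : iIdx K m (partitionOf K m l) < (partitionOf K m l).length,
      (Anode K m l).card ≠ m ∧
        Bnode K m l = (partitionOf K m l)[iIdx K m (partitionOf K m l)] := by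
  have hA : (Anode K m l).card ≠ m := by
    intro h
    rw [Anode] at h
    exact hB (by simp [Bnode, Bset, h])
  have hgetD : Bnode K m l = (partitionOf K m l).getD (iIdx K m (partitionOf K m l)) ∅ := by
    rw [Anode] at hA
    simp [Bnode, Bset, hA]
  have hi : iIdx K m (partitionOf K m l) < (partitionOf K m l).length := by
    by_contra! h
    exact hB (by rwa [List.getD_eq_default _ _ h] at hgetD)
  exact ⟨hi, hA, by rw [hgetD, List.getD_eq_getElem _ _ hi]⟩

/-- Parts before the undecided one have total size at most `m`, and adding it exceeds `m`;
so if `|A| ≠ m` then `|B| ≥ 2`. -/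
lemma two_le_card_Bnode {l : List (Finset (Fin K))}
    (hp : (partitionOf K m l).Pairwise Disjoint) (hB : Bnode K m l ≠ ∅) :
    2 ≤ (Bnode K m l).card := by
  obtain ⟨hi, hA, hBeq⟩ := Bnode_eq_getElem hB
  have hAcard : (Anode K m l).card =
      (((partitionOf K m l).take (iIdx K m (partitionOf K m l))).map Finset.card).sum :=
    card_foldr_union (hp.sublist (List.take_sublist _ _))
  have hle := sum_take_iIdx_le (m := m) (partitionOf K m l)
  have hlt := lt_sum_take_iIdx_succ hi
  rw [← List.take_concat_get hi, List.concat_eq_append, List.map_append, List.sum_append,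
    ← hBeq] at hlt
  simp only [List.map_cons, List.map_nil, List.sum_cons, List.sum_nil] at hlt
  omega

lemma partitionOf_cons {l : List (Finset (Fin K))} (T : Finset (Fin K))
    (hB : Bnode K m l ≠ ∅) :
    partitionOf K m l =
        (partitionOf K m l).take (iIdx K m (partitionOf K m l)) ++
          Bnode K m l :: (partitionOf K m l).drop (iIdx K m (partitionOf K m l) + 1) ∧
      partitionOf K m (T :: l) =
        (partitionOf K m l).take (iIdx K m (partitionOf K m l)) ++
          T :: (Bnode K m l \ T) ::
            (partitionOf K m l).drop (iIdx K m (partitionOf K m l) + 1) := by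
  obtain ⟨hi, -, hBeq⟩ := Bnode_eq_getElem hB
  refine ⟨by rw [hBeq, ← List.drop_eq_getElem_cons hi, List.take_append_drop], ?_⟩
  simp [partitionOf, hBeq, List.getElem?_eq_getElem hi]

lemma partitionOf_of_valid (hK : 0 < K) {l : List (Finset (Fin K))} (hl : Valid K m l) :
    (partitionOf K m l).Pairwise Disjoint ∧ (∀ S ∈ partitionOf K m l, S.Nonempty) ∧
      (partitionOf K m l).length = l.length + 1 := by
  induction l with
  | nil => simpa [partitionOf] using Finset.univ_nonempty_iff.mpr ⟨⟨0, hK⟩⟩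
  | cons T l ih =>
    obtain ⟨hl, hT, hTB⟩ := hl
    obtain ⟨hp, hne, hlen⟩ := ih hl
    have hB : Bnode K m l ≠ ∅ := (hT.mono hTB.subset).ne_empty
    obtain ⟨hsplit, hsplit'⟩ := partitionOf_cons (m := m) T hB
    rw [hsplit] at hp hne hlen
    rw [hsplit']
    refine ⟨pairwise_disjoint_split hp hTB.subset, ?_, ?_⟩
    · simp only [List.mem_append, List.mem_cons] at hne ⊢
      rintro S (hS | rfl | rfl | hS)
      · exact hne S (Or.inl hS)
      · exact hT
      · exact Finset.sdiff_nonempty.mpr hTB.not_subset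
      · exact hne S (Or.inr (Or.inr hS))
    · simp only [List.length_append, List.length_cons] at hlen ⊢
      omega

lemma length_lt_of_valid {l : List (Finset (Fin K))} (hl : Valid K m l)
    (hB : Bnode K m l ≠ ∅) : l.length < K := by
  obtain ⟨a, -⟩ := Finset.nonempty_iff_ne_empty.mpr hB
  obtain ⟨hp, hne, hlen⟩ := partitionOf_of_valid a.pos hl
  have hsum : (partitionOf K m l).length ≤ ((partitionOf K m l).map Finset.card).sum := by
    rw [← List.length_map Finset.card]
    refine List.length_le_sum_of_one_le _ fun n hn => ?_
    obtain ⟨S, hS, rfl⟩ := List.mem_map.mp hn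
    exact Finset.card_pos.mpr (hne S hS)
  have hcard := Finset.card_le_univ ((partitionOf K m l).foldr (· ∪ ·) ∅)
  rw [card_foldr_union hp, Fintype.card_fin] at hcard
  omega

end Tree

section Algorithm

variable {K m : ℕ} {c : List (Finset (Fin K)) → ℝ} {x : Fin K → ℝ}

lemma descend_eq_cons {l : List (Finset (Fin K))} (hl : Valid K m l) (hB : Bnode K m l ≠ ∅)
    (hc : c l ≤ 1 / K) : ∃ T, Valid K m (T :: l) ∧ descend K m c x l = T :: l := by
  obtain ⟨a, -⟩ := Finset.nonempty_iff_ne_empty.mpr hB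
  have hex := exists_le_gapX_topSet x
    (two_le_card_Bnode (partitionOf_of_valid a.pos hl).1 hB) hc
  obtain ⟨hj1, hjB, -⟩ := Nat.find_spec hex
  exact ⟨_, ⟨hl, topSet_nonempty x hj1 hjB.le, topSet_ssubset x hjB⟩,
    by rw [descend, dif_pos hex]⟩

lemma run_spec {ε : ℝ} (hc : ∀ l, Valid K m l → c l ≤ 1 / K) (f : ℕ)
    {l : List (Finset (Fin K))} (hl : Valid K m l) :
    Valid K m (run K m c ε x f l) ∧
      (Bnode K m (run K m c ε x f l) = ∅ ∨ stopAt K m c ε x (run K m c ε x f l) ∨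
        (run K m c ε x f l).length = l.length + f) := by
  induction f generalizing l with
  | zero => exact ⟨hl, Or.inr (Or.inr rfl)⟩
  | succ f ih =>
    by_cases hB : Bnode K m l = ∅
    · simpa [run, hB] using hl
    by_cases hstop : stopAt K m c ε x l
    · simpa [run, hB, hstop] using hl
    obtain ⟨T, hT, hdescend⟩ := descend_eq_cons (x := x) hl hB (hc l hl)
    simp only [run, hB, hstop, if_false, hdescend]
    obtain ⟨hvalid, hcases⟩ := ih hT
    refine ⟨hvalid, hcases.imp_right (Or.imp_right fun hlen => ?_)⟩
    rw [hlen, List.length_cons]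
    omega

end Algorithm

theorem stmt9_general (K m : ℕ) (ε : ℝ) (hε : 0 < ε)
    (c : List (Finset (Fin K)) → ℝ)
    (hc : ∀ l, Valid K m l → c l ∈ Set.Icc (0 : ℝ) (1 / K))
    (x : Fin K → ℝ)
    (hnotleaf : Bnode K m (Pmap K m c ε x) ≠ ∅) :
    ∃ Q, Q <:+ Pmap K m c ε x ∧ ∃ T : Finset (Fin K), T.Nonempty ∧ T ⊂ Bnode K m Q ∧
      |gapX K x T (Bnode K m Q) - c Q * rangeX K x (Bnode K m Q)| ≤ 10 * (K : ℝ) * ε := by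
  obtain ⟨hvalid, hcases⟩ := run_spec (ε := ε) (x := x) (fun l hl => (hc l hl).2) K
    (l := []) trivial
  have hdepth : (Pmap K m c ε x).length < K := length_lt_of_valid hvalid hnotleaf
  obtain ⟨q, hq, j, hj1, hjB, hbound⟩ : stopAt K m c ε x (Pmap K m c ε x) := by
    rcases hcases with hleaf | hstop | hlen
    · exact absurd hleaf hnotleaf
    · exact hstop
    · simp [Pmap, hlen] at hdepth
  refine ⟨q, (List.mem_tails _ _).mp hq, _, topSet_nonempty x hj1 hjB.le,
    topSet_ssubset x hjB, hbound.trans ?_⟩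
  have hdist : (((Pmap K m c ε x).length - q.length + 1 : ℕ) : ℝ) ≤ K := by
    exact_mod_cast (show (Pmap K m c ε x).length - q.length + 1 ≤ K by omega)
  nlinarith

/-- Lemma 2.5, item 3: if the output P̂ = P_{c,ε}(x) of the algorithm is not a leaf of
T_{K,m} (i.e. B(P̂) ≠ ∅), then some ancestor Q ⪯ P̂ has a child Q_j in T_{K,m} with
|gap_{Q_j}(x) - c(Q)·range_Q(x)| ≤ 10Kε. -/
theorem stmt9 (K m : ℕ) (hm : 1 ≤ m) (hK : m ≤ K) (ε : ℝ) (hε : 0 < ε)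
    (c : List (Finset (Fin K)) → ℝ)
    (hc : ∀ l, Valid K m l → c l ∈ Set.Icc (0 : ℝ) (1 / K))
    (x : Fin K → ℝ) (hx : ∀ i, x i ∈ Set.Icc (0 : ℝ) 1)
    (hnotleaf : Bnode K m (Pmap K m c ε x) ≠ ∅) :
    ∃ Q, Q <:+ Pmap K m c ε x ∧ ∃ T : Finset (Fin K), T.Nonempty ∧ T ⊂ Bnode K m Q ∧
      |gapX K x T (Bnode K m Q) - c Q * rangeX K x (Bnode K m Q)| ≤ 10 * (K : ℝ) * ε :=
  stmt9_general K m ε hε c hc x hnotleaf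

end MPB
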